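/- arXiv:2511.06564 — 2 statements merged into one kernel-verified Lean document; each statement's English description precedes it below -/
import Mathlib

section
/- Let λ = 6 + 2√5, let W > 0 be a real number, and let h : I → ℝ be a family of nonnegative reals indexed by a finite type I such that h(i) ≤ W/2 for every i ∈ I and Σ_{i ∈ I} h(i) ≥ (1 − 1/√λ)·W. Then there exists a partition of I into two sets I_A and I_B such that Σ_{i ∈ I_A} h(i) ≥ Σ_{i ∈ I_B} h(i) ≥ (1/2 − 1/√λ)·W. -/
/-- With `λ = 6 + 2√5` and `W > 0`, any family `h : I → ℝ` of nonnegative reals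
over a finite type `I` with `h i ≤ W/2` for all `i` and `Σ_i h i ≥ (1 − 1/√λ)·W` can be
partitioned into two parts `A` and `Aᶜ` with
`Σ_{i ∈ A} h i ≥ Σ_{i ∈ Aᶜ} h i ≥ (1/2 − 1/√λ)·W`. -/
theorem exists_balanced_partition {I : Type*} [Fintype I] [DecidableEq I]
    (W : ℝ) (hW : 0 < W)
    (h : I → ℝ) (hh0 : ∀ i, 0 ≤ h i) (hhW : ∀ i, h i ≤ W / 2)
    (hsum : ∑ i, h i ≥ (1 - 1 / Real.sqrt (6 + 2 * Real.sqrt 5)) * W) :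
    ∃ A : Finset I,
      ∑ i ∈ A, h i ≥ ∑ i ∈ Aᶜ, h i ∧
      ∑ i ∈ Aᶜ, h i ≥ (1 / 2 - 1 / Real.sqrt (6 + 2 * Real.sqrt 5)) * W := by
  set s := Real.sqrt (6 + 2 * Real.sqrt 5) with hsdef
  have h5 : Real.sqrt 5 ^ 2 = 5 := Real.sq_sqrt (by norm_num)
  have h5n : (0:ℝ) ≤ Real.sqrt 5 := Real.sqrt_nonneg 5
  have h5lt : Real.sqrt 5 ≤ 3 := by nlinarith
  have h5gt : (2:ℝ) ≤ Real.sqrt 5 := by nlinarith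
  have hsq : s ^ 2 = 6 + 2 * Real.sqrt 5 := Real.sq_sqrt (by positivity)
  have hsn : (0:ℝ) ≤ s := Real.sqrt_nonneg _
  have hs2 : (2:ℝ) < s := by nlinarith
  have hs4 : s ≤ 4 := by nlinarith
  have hs0 : (0:ℝ) < s := by linarith
  set S := ∑ i, h i with hSdef
  set L := (1 / 2 - 1 / s) * W with hLdef
  have hinv2 : 1 / s < 1 / 2 := by
    apply one_div_lt_one_div_of_lt <;> linarith
  have hinv4 : (1:ℝ) / 4 ≤ 1 / s := one_div_le_one_div_of_le hs0 hs4
  have hL : 0 < L := by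
    have : 0 < (1 / 2 - 1 / s) := by linarith
    exact mul_pos this hW
  have hSL : L + W / 2 ≤ S := by
    have : (1 - 1 / s) * W = L + W / 2 := by ring
    linarith [hsum]
  have h3L : 3 * L ≤ S := by
    have h1 : 3 * L ≤ (1 - 1 / s) * W := by nlinarith
    linarith [hsum]
  -- the collection of candidate sets
  set T : Finset (Finset I) :=
    Finset.univ.powerset.filter (fun B => L ≤ ∑ i ∈ B, h i) with hTdef
  have hmemT : ∀ B : Finset I, B ∈ T ↔ L ≤ ∑ i ∈ B, h i := by
    intro B
    simp [hTdef, Finset.mem_filter, Finset.mem_powerset]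
  have hTne : T.Nonempty := by
    refine ⟨Finset.univ, (hmemT _).mpr ?_⟩
    linarith
  obtain ⟨B, hBT, hBmin⟩ := T.exists_min_image (fun B => ∑ i ∈ B, h i) hTne
  have hBL : L ≤ ∑ i ∈ B, h i := (hmemT B).mp hBT
  have hcompl : ∑ i ∈ B, h i + ∑ i ∈ Bᶜ, h i = S := Finset.sum_add_sum_compl B h
  -- main claim
  have key : ∑ i ∈ B, h i ≤ S / 2 := by
    by_contra hlt
    push_neg at hlt
    have hBc : ∑ i ∈ Bᶜ, h i < L := by
      by_contra hge
      push_neg at hge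
      have := hBmin Bᶜ ((hmemT _).mpr hge)
      linarith
    have hBbig : S - L < ∑ i ∈ B, h i := by linarith
    -- find a positive element k of B
    have hpos : (0:ℝ) < ∑ i ∈ B, h i := by linarith
    obtain ⟨k, hkB, hk0⟩ : ∃ k ∈ B, 0 < h k := by
      by_contra hc
      push_neg at hc
      have : ∑ i ∈ B, h i ≤ 0 := Finset.sum_nonpos (fun i hi => hc i hi)
      linarith
    have hremove : ∀ m ∈ B, 0 < h m → ∑ i ∈ B, h i - h m < L := by
      intro m hmB hm0
      by_contra hge
      push_neg at hge
      have heq : ∑ i ∈ B.erase m, h i = ∑ i ∈ B, h i - h m := by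
        have := Finset.sum_erase_add B h hmB
        linarith
      have hmem : B.erase m ∈ T := (hmemT _).mpr (by rw [heq]; exact hge)
      have := hBmin _ hmem
      rw [heq] at this
      linarith
    have hk : ∑ i ∈ B, h i - h k < L := hremove k hkB hk0
    -- the rest of B still has positive sum
    have hkW : h k ≤ W / 2 := hhW k
    have herase : ∑ i ∈ B.erase k, h i = ∑ i ∈ B, h i - h k := by
      have := Finset.sum_erase_add B h hkB
      linarith
    have hpos2 : 0 < ∑ i ∈ B.erase k, h i := by
      rw [herase]; linarith
    obtain ⟨j, hjB', hj0⟩ : ∃ j ∈ B.erase k, 0 < h j := by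
      by_contra hc
      push_neg at hc
      have : ∑ i ∈ B.erase k, h i ≤ 0 := Finset.sum_nonpos (fun i hi => hc i hi)
      linarith
    have hjB : j ∈ B := Finset.mem_of_mem_erase hjB'
    have hj : ∑ i ∈ B, h i - h j < L := hremove j hjB hj0
    have hjk : h j ≤ ∑ i ∈ B.erase k, h i :=
      Finset.single_le_sum (fun i _ => hh0 i) hjB'
    -- h k + h j ≤ sum_B, both > sum_B - L, so sum_B < 2L; but sum_B > S - L ≥ 2L
    rw [herase] at hjk
    linarith
  refine ⟨Bᶜ, ?_, ?_⟩
  · rw [compl_compl]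
    have : ∑ i ∈ Bᶜ, h i = S - ∑ i ∈ B, h i := by linarith
    linarith
  · rw [compl_compl]
    exact hBL
end

section
/- Let G be a simple graph on a finite vertex type V, let w : V → ℕ be a weight function, and let S ⊆ V be a set of vertices such that every connected component H of the induced subgraph of G on V \ S satisfies w(H) ≤ w(V)/2. Let λ = 6 + 2√5. Then there exist disjoint sets A, B ⊆ V \ S with A ∪ B = V \ S such that no edge of G joins a vertex of A to a vertex of B, and (w(A) + w(S)) · (w(B) + w(S)) ≥ w(V)²/λ, where for a set F ⊆ V, w(F) denotes Σ_{v ∈ F} w(v) and w(H) denotes the total weight of the vertices of the component H. -/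
open scoped Classical

/-- The total weight `Σ_{v ∈ F} w v` of a set of vertices `F`. -/
noncomputable def setWeight {V : Type*} [Fintype V] (w : V → ℕ) (F : Set V) : ℕ :=
  ∑ v ∈ F.toFinset, w v

/-- The total weight of the connected component `C` of the subgraph of `G` induced on the
complement of `S` (i.e. of a component of `G − S`). -/
noncomputable def compWeight {V : Type*} [Fintype V] (G : SimpleGraph V) (S : Set V)
    (w : V → ℕ) (C : (G.induce Sᶜ).ConnectedComponent) : ℕ :=
  ∑ v : ↥Sᶜ, if (G.induce Sᶜ).connectedComponentMk v = C then w ↑v else 0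

/-!
Group the components of `G − S` into two sides `T` and `Tᶜ`; no edge crosses, so this is a vertex
cut. With `W = w(V)`, `s = w(S)`, it suffices to find `T` with `W ≤ 4 (w(T) + s)` and
`W ≤ 2 (w(Tᶜ) + s)`, since then `(w(T) + s)(w(Tᶜ) + s) ≥ W² / 8 ≥ W² / λ`. If some component
has weight at least `W / 4`, take it alone (its complement has weight `≥ W / 2` by hypothesis).
Otherwise take a heaviest family `T` of total weight at most half of `w(V \ S)`: adding any further
component of positive weight overshoots the half, and every component is lighter than `W / 4`.
-/

section Partition

variable {ι : Type*} [Fintype ι] (f : ι → ℕ)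

theorem exists_finset_maximal_sum_le_half :
    ∃ T : Finset ι, 2 * ∑ i ∈ T, f i ≤ ∑ i, f i ∧
      ∀ i ∉ T, f i = 0 ∨ ∑ i, f i < 2 * (∑ j ∈ T, f j + f i) := by
  obtain ⟨T, hT, hmax⟩ := Finset.exists_max_image
    (Finset.univ.filter fun T : Finset ι => 2 * ∑ i ∈ T, f i ≤ ∑ i, f i)
    (fun T => ∑ i ∈ T, f i) ⟨∅, by simp⟩
  simp only [Finset.mem_filter, Finset.mem_univ, true_and] at hT hmax
  refine ⟨T, hT, fun i hi => ?_⟩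
  have hinsert : ∑ j ∈ insert i T, f j = ∑ j ∈ T, f j + f i := by
    rw [Finset.sum_insert hi, add_comm]
  by_contra! h
  have := hmax (insert i T) (by omega)
  omega

theorem exists_finset_balanced_split (s : ℕ) (hf : ∀ i, 2 * f i ≤ s + ∑ i, f i) :
    ∃ T : Finset ι, s + ∑ i, f i ≤ 4 * (∑ i ∈ T, f i + s) ∧
      s + ∑ i, f i ≤ 2 * (∑ i ∈ Tᶜ, f i + s) := by
  by_cases hheavy : ∃ i, s + ∑ i, f i ≤ 4 * f i
  · obtain ⟨i, hi⟩ := hheavy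
    have hsplit := Finset.sum_add_sum_compl {i} f
    rw [Finset.sum_singleton] at hsplit
    refine ⟨{i}, ?_, ?_⟩
    · rw [Finset.sum_singleton]; omega
    · have := hf i; omega
  · push Not at hheavy
    obtain ⟨T, hhalf, hmax⟩ := exists_finset_maximal_sum_le_half f
    have hsplit := Finset.sum_add_sum_compl T f
    refine ⟨T, ?_, by omega⟩
    by_cases hzero : ∀ i ∈ Tᶜ, f i = 0
    · have := Finset.sum_eq_zero hzero; omega
    · push Not at hzero
      obtain ⟨i, hiT, hi⟩ := hzero
      have hover := (hmax i (Finset.mem_compl.mp hiT)).resolve_left hi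
      have := hheavy i
      omega

end Partition

theorem sq_div_le_mul_of_le_four_mul_of_le_two_mul {W x y : ℝ} (hW : 0 ≤ W) (hx : W ≤ 4 * x)
    (hy : W ≤ 2 * y) : W ^ 2 / (6 + 2 * Real.sqrt 5) ≤ x * y := by
  have hsqrt : (2 : ℝ) ≤ Real.sqrt 5 := by
    rw [Real.le_sqrt (by norm_num) (by norm_num)]; norm_num
  rw [div_le_iff₀ (by positivity)]
  nlinarith [mul_le_mul hx hy hW (by linarith)]

section Components

variable {V : Type*} (G : SimpleGraph V) (S : Set V)

def componentsSupp (T : Set (G.induce Sᶜ).ConnectedComponent) : Set V :=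
  Subtype.val '' ((G.induce Sᶜ).connectedComponentMk ⁻¹' T)

variable {G S}

theorem componentsSupp_subset_compl (T : Set (G.induce Sᶜ).ConnectedComponent) :
    componentsSupp G S T ⊆ Sᶜ := by
  rintro _ ⟨x, -, rfl⟩
  exact x.2

theorem disjoint_componentsSupp_compl (T : Set (G.induce Sᶜ).ConnectedComponent) :
    Disjoint (componentsSupp G S T) (componentsSupp G S Tᶜ) := by
  rw [Set.disjoint_left]
  rintro _ ⟨x, hx, rfl⟩ ⟨y, hy, hxy⟩
  obtain rfl : y = x := Subtype.ext hxy
  exact hy hx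

theorem componentsSupp_union_compl (T : Set (G.induce Sᶜ).ConnectedComponent) :
    componentsSupp G S T ∪ componentsSupp G S Tᶜ = Sᶜ := by
  refine subset_antisymm
    (Set.union_subset (componentsSupp_subset_compl T) (componentsSupp_subset_compl Tᶜ))
    fun v hv => ?_
  by_cases hvT : (G.induce Sᶜ).connectedComponentMk ⟨v, hv⟩ ∈ T
  · exact Or.inl ⟨⟨v, hv⟩, hvT, rfl⟩
  · exact Or.inr ⟨⟨v, hv⟩, hvT, rfl⟩

theorem not_adj_of_mem_componentsSupp_of_mem_componentsSupp_compl
    {T : Set (G.induce Sᶜ).ConnectedComponent} {a b : V}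
    (ha : a ∈ componentsSupp G S T) (hb : b ∈ componentsSupp G S Tᶜ) : ¬ G.Adj a b := by
  obtain ⟨x, hx, rfl⟩ := ha
  obtain ⟨y, hy, rfl⟩ := hb
  intro hadj
  have hreach : (G.induce Sᶜ).Reachable x y := SimpleGraph.Adj.reachable (G := G.induce Sᶜ) hadj
  rw [Set.mem_preimage, ← SimpleGraph.ConnectedComponent.sound hreach] at hy
  exact hy hx

theorem setWeight_componentsSupp [Fintype V] (w : V → ℕ)
    (T : Finset (G.induce Sᶜ).ConnectedComponent) :
    setWeight w (componentsSupp G S ↑T) = ∑ C ∈ T, compWeight G S w C := by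
  unfold setWeight compWeight componentsSupp
  rw [Finset.sum_comm, Set.toFinset_image,
    Finset.sum_image fun x _ y _ h => Subtype.ext h]
  simp only [Finset.sum_ite_eq, ← Finset.sum_filter]
  congr 1
  ext x
  simp

theorem setWeight_add_sum_compWeight [Fintype V] (w : V → ℕ) :
    setWeight w S + ∑ C, compWeight G S w C = ∑ v, w v := by
  have hcompl : componentsSupp G S Set.univ = Sᶜ := by
    ext v
    simp [componentsSupp]
  rw [← setWeight_componentsSupp, Finset.coe_univ, hcompl]
  unfold setWeight
  rw [Set.toFinset_compl]
  exact Finset.sum_add_sum_compl _ _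

end Components

/-- If `S` is a set of vertices of a simple graph `G` such that every connected
component `H` of `G − S` satisfies `w(H) ≤ w(V)/2`, then with `λ = 6 + 2√5` there exist
disjoint sets `A, B ⊆ V \ S` with `A ∪ B = V \ S`, no edge of `G` joining `A` to `B`, and
`(w(A) + w(S)) · (w(B) + w(S)) ≥ w(V)²/λ`. -/
theorem exists_vertex_cut_of_balanced_separator {V : Type*} [Fintype V]
    (G : SimpleGraph V) (w : V → ℕ) (S : Set V)
    (hsep : ∀ C : (G.induce Sᶜ).ConnectedComponent,
      (compWeight G S w C : ℝ) ≤ (∑ v : V, w v : ℕ) / 2) :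
    ∃ A B : Set V, A ⊆ Sᶜ ∧ B ⊆ Sᶜ ∧ Disjoint A B ∧ A ∪ B = Sᶜ ∧
      (∀ a ∈ A, ∀ b ∈ B, ¬ G.Adj a b) ∧
      ((setWeight w A : ℝ) + setWeight w S) * ((setWeight w B : ℝ) + setWeight w S) ≥
        ((∑ v : V, w v : ℕ) : ℝ) ^ 2 / (6 + 2 * Real.sqrt 5) := by
  have htotal := setWeight_add_sum_compWeight (G := G) (S := S) w
  have hhalf : ∀ C, 2 * compWeight G S w C ≤ setWeight w S + ∑ C, compWeight G S w C := by
    intro C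
    rw [htotal]
    exact_mod_cast (le_div_iff₀' two_pos).mp (hsep C)
  obtain ⟨T, hT, hTc⟩ := exists_finset_balanced_split _ _ hhalf
  refine ⟨componentsSupp G S T, componentsSupp G S (↑T)ᶜ, componentsSupp_subset_compl _,
    componentsSupp_subset_compl _, disjoint_componentsSupp_compl _, componentsSupp_union_compl _,
    fun a ha b hb => not_adj_of_mem_componentsSupp_of_mem_componentsSupp_compl ha hb, ?_⟩
  rw [← Finset.coe_compl, setWeight_componentsSupp, setWeight_componentsSupp, ← htotal]
  exact sq_div_le_mul_of_le_four_mul_of_le_two_mul (by positivity) (by exact_mod_cast hT)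
    (by exact_mod_cast hTc)
end
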